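/- For all signs ε, ε' ∈ {+1,−1} and every integer k with 0 ≤ k ≤ 2r the following identity holds in Cl ⊗ Cl: (2r−k)!·p_{εε'}·I_k = εε'·(−1)^r·k!·p_{εε'}·I_{2r−k}. -/

import Mathlib

open scoped TensorProduct

noncomputable section

/-- The quadratic form `x₁² + ⋯ + x_{2r}²` on `ℂ^{2r}`. -/
def Qf (r : ℕ) : QuadraticForm ℂ (Fin (2*r) → ℂ) :=
  QuadraticMap.weightedSumSquares ℂ (fun _ : Fin (2*r) => (1:ℂ))

/-- The Clifford algebra of `Qf r`. -/
abbrev Cl (r : ℕ) := CliffordAlgebra (Qf r)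

/-- The generators `Γ_i`. -/
def Γgen (r : ℕ) (i : Fin (2*r)) : Cl r :=
  CliffordAlgebra.ι (Qf r) (Pi.single i 1)

/-- The antisymmetrised products `Γ_{[i₁…i_k]}`. -/
def Γbr (r k : ℕ) (i : Fin k → Fin (2*r)) : Cl r :=
  ((k.factorial : ℂ))⁻¹ •
    ∑ σ : Equiv.Perm (Fin k),
      ((Equiv.Perm.sign σ : ℤ) : ℂ) • (List.ofFn fun j => Γgen r (i (σ j))).prod

/-- The invariants `I_k ∈ Cl ⊗ Cl`. -/
def Ik (r k : ℕ) : Cl r ⊗[ℂ] Cl r :=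
  ∑ i : Fin k → Fin (2*r), (Γbr r k i) ⊗ₜ[ℂ] (Γbr r k i)

/-- The split Casimir element `Ĉ = −I₂/(16(2r−2))`. -/
def sC (r : ℕ) : Cl r ⊗[ℂ] Cl r := (-(16*(2*(r:ℂ)-2))⁻¹) • Ik r 2

/-- The top element `Γ_{2r+1} = (−i)^r Γ₁⋯Γ_{2r}`. -/
def Γtop (r : ℕ) : Cl r :=
  ((-Complex.I)^r) • (List.ofFn fun i : Fin (2*r) => Γgen r i).prod

/-- The chirality projector `p_ε = (1 + ε Γ_{2r+1})/2`. -/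
def pCh (r : ℕ) (ε : ℂ) : Cl r := (2:ℂ)⁻¹ • (1 + ε • Γtop r)

/-- The chirality projectors `p_{εε'} = p_ε ⊗ p_{ε'}`. -/
def ppCh (r : ℕ) (ε ε' : ℂ) : Cl r ⊗[ℂ] Cl r := (pCh r ε) ⊗ₜ[ℂ] (pCh r ε')

/-- The eigenvalues `c_k = (2k(2r−k) − r(2r−1))/(16(r−1))`. -/
def cEv (r k : ℕ) : ℂ :=
  (2*(k:ℂ)*(2*(r:ℂ)-(k:ℂ)) - (r:ℂ)*(2*(r:ℂ)-1)) / (16*((r:ℂ)-1))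

/-- The spectral projectors `P_k = Π_{j≠k} (Ĉ − c_j)/(c_k − c_j)`. -/
def Pk (r k : ℕ) : Cl r ⊗[ℂ] Cl r :=
  (((List.range (r+1)).filter (fun j => j ≠ k)).map
    (fun j => (cEv r k - cEv r j)⁻¹ • (sC r - cEv r j • 1))).prod

/-- `P_r^S = (p_{++} + p_{−−})·P_r`. -/
def PrS (r : ℕ) : Cl r ⊗[ℂ] Cl r := (ppCh r 1 1 + ppCh r (-1) (-1)) * Pk r r

/-- The ascending factorial `a_k(u) = (u/2)(u/2+1)⋯(u/2+k−1)`. -/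
def asc (u : ℂ) (k : ℕ) : ℂ := ∏ j ∈ Finset.range k, (u/2 + (j:ℂ))

/-! Both invariants reduce to the sums `J_k = ∑_{|S| = k} Γ_S ⊗ Γ_S` of ordered products over
`k`-subsets. Antisymmetrising a tuple of distinct anticommuting generators returns their product
times the sign of the permutation, and signs square away in `Γ ⊗ Γ`, so `I_k = k! • J_k`.
Multiplying `Γ_S` by `Γ_{2r+1} = (-i)^r Γ_{univ}` gives `± (-i)^r Γ_{Sᶜ}`, hence
`(Γ_{2r+1} ⊗ Γ_{2r+1}) J_k = (-1)^r J_{2r-k}`; finally `p_{εε'}` absorbs `Γ_{2r+1} ⊗ Γ_{2r+1}`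
as the scalar `εε'`, because `Γ_{2r+1}² = 1`. -/

open Finset

section Anticommuting

variable {A : Type*} [Ring A]

def Anticommute (a b : A) : Prop := a * b = -(b * a)

theorem Anticommute.symm {a b : A} (h : Anticommute a b) : Anticommute b a := by
  rw [Anticommute, h, neg_neg]

theorem prod_ofFn_comp_swap_castSucc_succ {n : ℕ} (f : Fin (n + 1) → A) (i : Fin n)
    (hf : Anticommute (f i.castSucc) (f i.succ)) :
    (List.ofFn (f ∘ Equiv.swap i.castSucc i.succ)).prod = -(List.ofFn f).prod := by
  induction n with
  | zero => exact i.elim0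
  | succ n ih =>
    cases i using Fin.cases with
    | zero =>
      have htail (j : Fin n) : Equiv.swap (0 : Fin (n + 2)) 1 j.succ.succ = j.succ.succ :=
        Equiv.swap_apply_of_ne_of_ne (by simp [Fin.ext_iff]) (by simp [Fin.ext_iff])
      simp only [Anticommute, Fin.castSucc_zero, Fin.succ_zero_eq_one] at hf ⊢
      simp only [List.ofFn_succ, Function.comp_apply, Fin.succ_zero_eq_one, Equiv.swap_apply_left,
        Equiv.swap_apply_right, htail, List.prod_cons, ← mul_assoc, hf, neg_mul, neg_neg]
    | succ i =>
      have hsucc (j : Fin (n + 1)) : Equiv.swap i.succ.castSucc i.succ.succ j.succ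
          = (Equiv.swap i.castSucc i.succ j).succ := by
        rw [← Fin.succ_castSucc, Fin.succ_injective _ |>.swap_apply]
      rw [List.ofFn_succ, List.ofFn_succ (f := f), List.prod_cons, List.prod_cons]
      simp only [Function.comp_apply, hsucc]
      rw [Equiv.swap_apply_of_ne_of_ne (by simp [Fin.ext_iff]) (by simp [Fin.ext_iff])]
      have := ih (fun j => f j.succ) i (by simpa only [Fin.succ_castSucc] using hf)
      rw [Function.comp_def] at this
      rw [this, mul_neg]

theorem prod_ofFn_comp_perm {n : ℕ} {f : Fin n → A}
    (hf : Pairwise fun i j => Anticommute (f i) (f j)) (σ : Equiv.Perm (Fin n)) :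
    (List.ofFn (f ∘ σ)).prod = Equiv.Perm.sign σ • (List.ofFn f).prod := by
  cases n with
  | zero => simp [Subsingleton.elim σ 1]
  | succ n =>
    have hσ : σ ∈ Submonoid.closure (Set.range fun i : Fin n ↦ Equiv.swap i.castSucc i.succ) :=
      (Equiv.Perm.mclosure_swap_castSucc_succ n).symm ▸ Submonoid.mem_top σ
    induction hσ using Submonoid.closure_induction generalizing f with
    | mem _ hτ =>
      obtain ⟨i, rfl⟩ := hτ
      rw [prod_ofFn_comp_swap_castSucc_succ f i (hf Fin.castSucc_lt_succ.ne),
        Equiv.Perm.sign_swap Fin.castSucc_lt_succ.ne, Units.neg_smul, one_smul]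
    | one => simp
    | mul τ ρ _ _ hτ hρ =>
      rw [Equiv.Perm.coe_mul, ← Function.comp_assoc,
        hρ (f := f ∘ τ) (hf.comp_of_injective τ.injective), hτ hf, smul_smul, Equiv.Perm.sign_mul,
        mul_comm]

theorem List.Perm.prod_eq_units_smul {l₁ l₂ : List A} (h : l₁.Perm l₂)
    (hl : l₁.Pairwise Anticommute) : ∃ s : ℤˣ, l₁.prod = s • l₂.prod := by
  induction h with
  | nil => exact ⟨1, by simp⟩
  | cons x _ ih =>
    obtain ⟨s, hs⟩ := ih (List.pairwise_cons.mp hl).2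
    exact ⟨s, by rw [List.prod_cons, List.prod_cons, hs, mul_smul_comm]⟩
  | swap x y l =>
    have hyx : y * x = -(x * y) := (List.pairwise_cons.mp hl).1 x List.mem_cons_self
    refine ⟨-1, ?_⟩
    simp only [List.prod_cons, ← mul_assoc, hyx, neg_mul, Units.neg_smul, one_smul]
  | trans h₁₂ _ ih₁₂ ih₂₃ =>
    obtain ⟨s, hs⟩ := ih₁₂ hl
    obtain ⟨t, ht⟩ := ih₂₃ ((h₁₂.pairwise_iff fun h => h.symm).mp hl)
    exact ⟨s * t, by rw [hs, ht, smul_smul]⟩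

theorem List.prod_mul_eq_neg_one_pow_smul {a : A} {l : List A} (h : ∀ b ∈ l, Anticommute b a) :
    l.prod * a = ((-1 : ℤˣ) ^ l.length) • (a * l.prod) := by
  induction l with
  | nil => simp
  | cons b t ih =>
    have hb : b * a = -(a * b) := h b List.mem_cons_self
    rw [List.prod_cons, mul_assoc, ih fun c hc => h c (List.mem_cons_of_mem _ hc), mul_smul_comm,
      ← mul_assoc, hb, List.length_cons, pow_succ, mul_comm, mul_smul, Units.neg_smul, one_smul,
      neg_mul, mul_assoc, smul_neg]

theorem List.prod_mul_prod_self {l : List A} (hsq : ∀ a ∈ l, a * a = 1)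
    (hl : l.Pairwise Anticommute) : l.prod * l.prod = ((-1 : ℤˣ) ^ l.length.choose 2) • 1 := by
  induction l with
  | nil => simp
  | cons a t ih =>
    obtain ⟨ha, ht⟩ := List.pairwise_cons.mp hl
    have hmove := List.prod_mul_eq_neg_one_pow_smul (a := a) (l := t) fun b hb => (ha b hb).symm
    calc (a :: t).prod * (a :: t).prod = a * (t.prod * a) * t.prod := by
          rw [List.prod_cons, mul_assoc, mul_assoc, mul_assoc]
      _ = ((-1 : ℤˣ) ^ t.length) • ((a * a) * (t.prod * t.prod)) := by
          rw [hmove, mul_smul_comm, smul_mul_assoc, ← mul_assoc, ← mul_assoc, mul_assoc (a * a)]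
      _ = _ := by
          rw [hsq a List.mem_cons_self, one_mul,
            ih (fun b hb => hsq b (List.mem_cons_of_mem _ hb)) ht, smul_smul, ← pow_add, List.length_cons, Nat.choose_succ_succ', Nat.choose_one_right,
            add_comm]

end Anticommuting

theorem Finset.card_filter_injective_image_eq {α : Type*} [Fintype α] [DecidableEq α] {k : ℕ}
    {S : Finset α} (hS : #S = k) :
    #{i : Fin k → α | Function.Injective i ∧ univ.image i = S} = k.factorial := by
  have hcard : Fintype.card (Fin k ≃ S) = k.factorial := by
    rw [Fintype.card_equiv (Fintype.equivFinOfCardEq (by simp [hS])).symm, Fintype.card_fin]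
  rw [← hcard, ← card_univ]
  symm
  refine card_bij (fun e _ j => (e j : α)) (fun e _ => ?_) (fun e₁ _ e₂ _ h => ?_) (fun i hi => ?_)
  · simp only [mem_filter, mem_univ, true_and]
    refine ⟨Subtype.val_injective.comp e.injective, ?_⟩
    ext x
    simp only [mem_image, mem_univ, true_and]
    exact ⟨fun ⟨j, hj⟩ => hj ▸ (e j).2, fun hx => ⟨e.symm ⟨x, hx⟩, by simp⟩⟩
  · ext j
    exact congrFun h j
  · simp only [mem_filter, mem_univ, true_and] at hi
    obtain ⟨hinj, himage⟩ := hi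
    have hmem (j : Fin k) : i j ∈ S := himage ▸ mem_image_of_mem i (mem_univ j)
    refine ⟨Equiv.ofBijective (fun j => ⟨i j, hmem j⟩) ⟨fun a b h => hinj congr(($h).1), ?_⟩,
      mem_univ _, rfl⟩
    rintro ⟨x, hx⟩
    obtain ⟨j, -, hj⟩ := mem_image.mp (himage ▸ hx)
    exact ⟨j, Subtype.ext hj⟩

theorem Finset.sum_injective_eq_factorial_smul_sum_powersetCard {α M : Type*} [Fintype α]
    [DecidableEq α] [AddCommMonoid M] (k : ℕ) (G : Finset α → M) :
    ∑ i : Fin k → α with Function.Injective i, G (univ.image i)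
      = k.factorial • ∑ S ∈ powersetCard k univ, G S := by
  have hmaps : ∀ i ∈ ({i : Fin k → α | Function.Injective i} : Finset _),
      univ.image i ∈ powersetCard k univ := fun i hi => by
    simp only [mem_filter, mem_univ, true_and] at hi
    simp [card_image_of_injective _ hi]
  rw [← sum_fiberwise_of_maps_to' hmaps, smul_sum]
  refine sum_congr rfl fun S hS => ?_
  rw [sum_const, filter_filter, card_filter_injective_image_eq (mem_powersetCard.mp hS).2]

theorem Nat.add_two_mul_choose_two (r : ℕ) : r + (2 * r).choose 2 = 2 * (r * r) := by
  rcases r with _ | m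
  · rfl
  · rw [Nat.choose_two_right, show 2 * (m + 1) - 1 = 2 * m + 1 by omega,
      show 2 * (m + 1) * (2 * m + 1) = 2 * ((m + 1) * (2 * m + 1)) by ring,
      Nat.mul_div_cancel_left _ two_pos]
    ring

section Clifford

variable {r : ℕ}

theorem Qf_single (i : Fin (2 * r)) : Qf r (Pi.single i 1) = 1 := by
  simp [Qf, QuadraticMap.weightedSumSquares_apply, Pi.single_apply]

theorem Γgen_mul_self (i : Fin (2 * r)) : Γgen r i * Γgen r i = 1 := by
  rw [Γgen, CliffordAlgebra.ι_sq_scalar, Qf_single, map_one]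

theorem Γgen_anticommute {i j : Fin (2 * r)} (h : i ≠ j) : Anticommute (Γgen r i) (Γgen r j) := by
  refine CliffordAlgebra.ι_mul_ι_comm_of_isOrtho ?_
  simp only [QuadraticMap.IsOrtho, Qf_single]
  simp [Qf, QuadraticMap.weightedSumSquares_apply, Pi.single_apply, sum_add_distrib, mul_add, h,
    h.symm]

theorem Γbr_eq_prod_of_injective {k : ℕ} {i : Fin k → Fin (2 * r)} (hi : Function.Injective i) :
    Γbr r k i = (List.ofFn (Γgen r ∘ i)).prod := by
  have hanti : Pairwise fun a b => Anticommute ((Γgen r ∘ i) a) ((Γgen r ∘ i) b) :=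
    fun a b hab => Γgen_anticommute (hi.ne hab)
  have hterm (σ : Equiv.Perm (Fin k)) : ((Equiv.Perm.sign σ : ℤ) : ℂ) •
      (List.ofFn fun j => Γgen r (i (σ j))).prod = (List.ofFn (Γgen r ∘ i)).prod := by
    rw [show (List.ofFn fun j => Γgen r (i (σ j))) = List.ofFn ((Γgen r ∘ i) ∘ σ) from rfl,
      prod_ofFn_comp_perm hanti]
    rcases Int.units_eq_one_or (Equiv.Perm.sign σ) with h | h <;> simp [h]
  rw [Γbr, sum_congr rfl fun σ _ => hterm σ, sum_const, card_univ, Fintype.card_perm,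
    Fintype.card_fin, ← Nat.cast_smul_eq_nsmul ℂ, smul_smul,
    inv_mul_cancel₀ (Nat.cast_ne_zero.mpr k.factorial_ne_zero), one_smul]

theorem Γbr_eq_alternatization (k : ℕ) (i : Fin k → Fin (2 * r)) :
    Γbr r k i = ((k.factorial : ℂ))⁻¹ • MultilinearMap.alternatization
      (MultilinearMap.mkPiAlgebraFin ℂ k (Cl r)) (Γgen r ∘ i) := by
  simp [Γbr, MultilinearMap.alternatization_apply, Units.smul_def, Int.cast_smul_eq_zsmul]

theorem Γbr_eq_zero_of_not_injective {k : ℕ} {i : Fin k → Fin (2 * r)}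
    (hi : ¬ Function.Injective i) : Γbr r k i = 0 := by
  rw [Γbr_eq_alternatization, AlternatingMap.map_eq_zero_of_not_injective _ _
    fun h => hi (Function.Injective.of_comp h), smul_zero]

theorem pairwise_anticommute_map_Γgen {l : List (Fin (2 * r))} (hl : l.Nodup) :
    (l.map (Γgen r)).Pairwise Anticommute :=
  List.Pairwise.map _ (fun _ _ => Γgen_anticommute) hl

def Γset (r : ℕ) (S : Finset (Fin (2 * r))) : Cl r :=
  ((S.sort (· ≤ ·)).map (Γgen r)).prod

theorem Γset_mul_self (S : Finset (Fin (2 * r))) :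
    Γset r S * Γset r S = ((-1 : ℤˣ) ^ (#S).choose 2) • 1 := by
  rw [Γset, List.prod_mul_prod_self _ (pairwise_anticommute_map_Γgen (sort_nodup _ _)),
    List.length_map, length_sort]
  simp only [List.mem_map]
  rintro _ ⟨i, -, rfl⟩
  exact Γgen_mul_self i

theorem prod_ofFn_Γgen_eq_units_smul_Γset {k : ℕ} {i : Fin k → Fin (2 * r)}
    (hi : Function.Injective i) :
    ∃ s : ℤˣ, (List.ofFn (Γgen r ∘ i)).prod = s • Γset r (univ.image i) := by
  have hperm : (List.ofFn i).Perm ((univ.image i).sort (· ≤ ·)) :=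
    List.perm_of_nodup_nodup_toFinset_eq (List.nodup_ofFn.mpr hi) (sort_nodup _ _)
      (by ext; simp)
  rw [← List.map_ofFn]
  exact (hperm.map _).prod_eq_units_smul (pairwise_anticommute_map_Γgen (List.nodup_ofFn.mpr hi))

theorem Γtop_eq_smul_Γset_univ : Γtop r = (-Complex.I) ^ r • Γset r univ := by
  rw [Γtop, Γset, Fin.sort_univ, List.ofFn_eq_map]

theorem Γtop_mul_self : Γtop r * Γtop r = 1 := by
  have hscalar : (-Complex.I) ^ r * (-Complex.I) ^ r * (((-1 : ℤˣ) ^ (2 * r).choose 2 : ℤˣ) : ℂ)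
      = 1 := by
    rw [← mul_pow, neg_mul_neg, Complex.I_mul_I]
    push_cast
    rw [← pow_add, Nat.add_two_mul_choose_two, pow_mul]
    norm_num
  rw [Γtop_eq_smul_Γset_univ, smul_mul_smul_comm, Γset_mul_self, card_univ, Fintype.card_fin,
    Units.smul_def, ← Int.cast_smul_eq_zsmul ℂ, smul_smul, hscalar, one_smul]

theorem Γtop_mul_Γset (S : Finset (Fin (2 * r))) :
    ∃ s : ℤˣ, Γtop r * Γset r S = s • (-Complex.I) ^ r • Γset r Sᶜ := by
  have hperm : (univ.sort (· ≤ ·)).Perm (Sᶜ.sort (· ≤ ·) ++ S.sort (· ≤ ·)) :=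
    List.perm_of_nodup_nodup_toFinset_eq (sort_nodup _ _)
      ((sort_nodup _ _).append (sort_nodup _ _) (List.disjoint_left.mpr fun a ha hb => by
        simp only [mem_sort, mem_compl] at ha hb; exact ha hb))
      (by ext a; by_cases a ∈ S <;> simp [*])
  obtain ⟨s, hs⟩ := (hperm.map (Γgen r)).prod_eq_units_smul
    (pairwise_anticommute_map_Γgen (sort_nodup _ _))
  rw [List.map_append, List.prod_append] at hs
  refine ⟨s * (-1) ^ (#S).choose 2, ?_⟩
  rw [Γtop_eq_smul_Γset_univ, Γset, hs, ← Γset, ← Γset, smul_mul_assoc, smul_mul_assoc, mul_assoc,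
    Γset_mul_self, mul_smul_comm, mul_one, mul_smul,
    smul_comm ((-Complex.I) ^ r) s, smul_comm ((-Complex.I) ^ r) ((-1 : ℤˣ) ^ (#S).choose 2)]

theorem TensorProduct.intUnits_smul_tmul_smul {R M N : Type*} [CommRing R] [AddCommGroup M]
    [AddCommGroup N] [Module R M] [Module R N] (u : ℤˣ) (x : M) (y : N) :
    (u • x) ⊗ₜ[R] (u • y) = x ⊗ₜ y := by
  rcases Int.units_eq_one_or u with rfl | rfl <;>
    simp [TensorProduct.neg_tmul, TensorProduct.tmul_neg]

theorem Γtop_tmul_Γtop_mul_Γset_tmul_Γset (S : Finset (Fin (2 * r))) :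
    (Γtop r ⊗ₜ[ℂ] Γtop r) * (Γset r S ⊗ₜ[ℂ] Γset r S)
      = (-1 : ℂ) ^ r • (Γset r Sᶜ ⊗ₜ Γset r Sᶜ) := by
  obtain ⟨s, hs⟩ := Γtop_mul_Γset S
  rw [Algebra.TensorProduct.tmul_mul_tmul, hs, TensorProduct.intUnits_smul_tmul_smul,
    TensorProduct.smul_tmul_smul, ← mul_pow, neg_mul_neg, Complex.I_mul_I]

def Jk (r k : ℕ) : Cl r ⊗[ℂ] Cl r :=
  ∑ S ∈ powersetCard k univ, Γset r S ⊗ₜ[ℂ] Γset r S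

theorem Ik_eq_factorial_smul_Jk (k : ℕ) : Ik r k = (k.factorial : ℂ) • Jk r k := by
  have hterm (i : Fin k → Fin (2 * r)) : Γbr r k i ⊗ₜ[ℂ] Γbr r k i
      = if Function.Injective i then Γset r (univ.image i) ⊗ₜ Γset r (univ.image i) else 0 := by
    split_ifs with hi
    · obtain ⟨s, hs⟩ := prod_ofFn_Γgen_eq_units_smul_Γset hi
      rw [Γbr_eq_prod_of_injective hi, hs, TensorProduct.intUnits_smul_tmul_smul]
    · rw [Γbr_eq_zero_of_not_injective hi, TensorProduct.zero_tmul]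
  rw [Ik, sum_congr rfl fun i _ => hterm i, ← sum_filter,
    sum_injective_eq_factorial_smul_sum_powersetCard k fun S => Γset r S ⊗ₜ[ℂ] Γset r S,
    Nat.cast_smul_eq_nsmul, Jk]

theorem Γtop_tmul_Γtop_mul_Jk {k : ℕ} (hk : k ≤ 2 * r) :
    (Γtop r ⊗ₜ[ℂ] Γtop r) * Jk r k = (-1 : ℂ) ^ r • Jk r (2 * r - k) := by
  rw [Jk, mul_sum, sum_congr rfl fun S _ => Γtop_tmul_Γtop_mul_Γset_tmul_Γset S, ← smul_sum, Jk]
  congr 1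
  refine sum_nbij' compl compl (fun S hS => ?_) (fun S hS => ?_) (fun S _ => compl_compl S)
    (fun S _ => compl_compl S) fun _ _ => rfl
  · simp only [mem_powersetCard, subset_univ, true_and, card_compl, Fintype.card_fin] at hS ⊢
    omega
  · simp only [mem_powersetCard, subset_univ, true_and, card_compl, Fintype.card_fin] at hS ⊢
    omega

end Clifford

section Chirality

variable {r : ℕ} {ε ε' : ℂ}

theorem pCh_mul_Γtop (hε : ε * ε = 1) : pCh r ε * Γtop r = ε • pCh r ε := by
  rw [pCh, smul_mul_assoc, add_mul, one_mul, smul_mul_assoc, Γtop_mul_self,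
    smul_comm ε (2⁻¹ : ℂ) (1 + ε • Γtop r), smul_add ε, smul_smul ε ε, hε, one_smul, add_comm]

theorem ppCh_mul_Γtop_tmul_Γtop (hε : ε * ε = 1) (hε' : ε' * ε' = 1) :
    ppCh r ε ε' * (Γtop r ⊗ₜ[ℂ] Γtop r) = (ε * ε') • ppCh r ε ε' := by
  rw [ppCh, Algebra.TensorProduct.tmul_mul_tmul, pCh_mul_Γtop hε, pCh_mul_Γtop hε',
    TensorProduct.smul_tmul_smul]

theorem ppCh_mul_Jk (hε : ε * ε = 1) (hε' : ε' * ε' = 1) {k : ℕ} (hk : k ≤ 2 * r) :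
    ppCh r ε ε' * Jk r k = (ε * ε' * (-1) ^ r) • (ppCh r ε ε' * Jk r (2 * r - k)) := by
  have hp : ppCh r ε ε' = (ε * ε') • (ppCh r ε ε' * (Γtop r ⊗ₜ[ℂ] Γtop r)) := by
    rw [ppCh_mul_Γtop_tmul_Γtop hε hε', smul_smul,
      show ε * ε' * (ε * ε') = 1 by linear_combination ε' * ε' * hε + hε', one_smul]
  calc ppCh r ε ε' * Jk r k
      = (ε * ε') • (ppCh r ε ε' * ((Γtop r ⊗ₜ[ℂ] Γtop r) * Jk r k)) := by
        nth_rewrite 1 [hp]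
        rw [smul_mul_assoc, mul_assoc]
    _ = _ := by rw [Γtop_tmul_Γtop_mul_Jk hk, mul_smul_comm, smul_smul]

end Chirality

theorem ppCh_mul_Ik_general (r : ℕ) (ε ε' : ℂ)
    (hε : ε = 1 ∨ ε = -1) (hε' : ε' = 1 ∨ ε' = -1) (k : ℕ) (hk : k ≤ 2*r) :
    (((2*r - k).factorial : ℂ)) • (ppCh r ε ε' * Ik r k)
      = (ε * ε' * (-1:ℂ)^r * (k.factorial : ℂ)) • (ppCh r ε ε' * Ik r (2*r - k)) := by
  have hsq {x : ℂ} (hx : x = 1 ∨ x = -1) : x * x = 1 := by rcases hx with rfl | rfl <;> norm_num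
  rw [Ik_eq_factorial_smul_Jk, Ik_eq_factorial_smul_Jk, mul_smul_comm, mul_smul_comm,
    ppCh_mul_Jk (hsq hε) (hsq hε') hk, smul_smul, smul_smul, smul_smul]
  congr 1
  ring

/-- `(2r−k)!·p_{εε'}·I_k = εε'·(−1)^r·k!·p_{εε'}·I_{2r−k}`. -/
theorem ppCh_mul_Ik (r : ℕ) (hr : 2 ≤ r) (ε ε' : ℂ)
    (hε : ε = 1 ∨ ε = -1) (hε' : ε' = 1 ∨ ε' = -1) (k : ℕ) (hk : k ≤ 2*r) :
    (((2*r - k).factorial : ℂ)) • (ppCh r ε ε' * Ik r k)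
      = (ε * ε' * (-1:ℂ)^r * (k.factorial : ℂ)) • (ppCh r ε ε' * Ik r (2*r - k)) :=
  ppCh_mul_Ik_general r ε ε' hε hε' k hk

end
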